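/- Let U on X and V on Y be Banach space operators that are equivalent after extension, and assume V can be approximated in operator norm by invertible operators on Y. Then U and V are Schur coupled, i.e., there exists S = [[A,B],[C,D]] on X ⊕ Y with A, D invertible, U = A - BD⁻¹C and V = D - CA⁻¹B. -/
import Mathlib


open ContinuousLinearMap

/-- 2×2 block operator matrix `[[A, B],[C, D]] : X ⊕ Y → X' ⊕ Y'`. -/
noncomputable def blk {X Y X' Y' : Type*} [NormedAddCommGroup X] [NormedSpace ℝ X]
    [NormedAddCommGroup Y] [NormedSpace ℝ Y] [NormedAddCommGroup X'] [NormedSpace ℝ X']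
    [NormedAddCommGroup Y'] [NormedSpace ℝ Y']
    (A : X →L[ℝ] X') (B : Y →L[ℝ] X') (C : X →L[ℝ] Y') (D : Y →L[ℝ] Y') :
    (X × Y) →L[ℝ] (X' × Y') :=
  (A.coprod B).prod (C.coprod D)

lemma blk_apply {X Y X' Y' : Type*} [NormedAddCommGroup X] [NormedSpace ℝ X]
    [NormedAddCommGroup Y] [NormedSpace ℝ Y] [NormedAddCommGroup X'] [NormedSpace ℝ X']
    [NormedAddCommGroup Y'] [NormedSpace ℝ Y']
    (A : X →L[ℝ] X') (B : Y →L[ℝ] X') (C : X →L[ℝ] Y') (D : Y →L[ℝ] Y') (p : X × Y) :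
    blk A B C D p = (A p.1 + B p.2, C p.1 + D p.2) := by
  simp [blk]

section blocks
variable {X Y X' Y' : Type*} [NormedAddCommGroup X] [NormedSpace ℝ X]
    [NormedAddCommGroup Y] [NormedSpace ℝ Y] [NormedAddCommGroup X'] [NormedSpace ℝ X']
    [NormedAddCommGroup Y'] [NormedSpace ℝ Y']

/-- (1,1)-entry of a block operator. -/
noncomputable def b11 (T : (X × Y) →L[ℝ] (X' × Y')) : X →L[ℝ] X' :=
  (ContinuousLinearMap.fst ℝ X' Y').comp (T.comp (ContinuousLinearMap.inl ℝ X Y))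

/-- (1,2)-entry of a block operator. -/
noncomputable def b12 (T : (X × Y) →L[ℝ] (X' × Y')) : Y →L[ℝ] X' :=
  (ContinuousLinearMap.fst ℝ X' Y').comp (T.comp (ContinuousLinearMap.inr ℝ X Y))

/-- (2,1)-entry of a block operator. -/
noncomputable def b21 (T : (X × Y) →L[ℝ] (X' × Y')) : X →L[ℝ] Y' :=
  (ContinuousLinearMap.snd ℝ X' Y').comp (T.comp (ContinuousLinearMap.inl ℝ X Y))

/-- (2,2)-entry of a block operator. -/
noncomputable def b22 (T : (X × Y) →L[ℝ] (X' × Y')) : Y →L[ℝ] Y' :=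
  (ContinuousLinearMap.snd ℝ X' Y').comp (T.comp (ContinuousLinearMap.inr ℝ X Y))

end blocks

set_option maxHeartbeats 3000000 in
/-- If `U` and `V` are equivalent after extension and `V` can be approximated in operator norm
by invertible operators, then `U` and `V` are Schur coupled. -/
theorem stmt10 {X Y X₀ Y₀ : Type*} [NormedAddCommGroup X] [NormedSpace ℝ X] [CompleteSpace X]
    [NormedAddCommGroup Y] [NormedSpace ℝ Y] [CompleteSpace Y]
    [NormedAddCommGroup X₀] [NormedSpace ℝ X₀] [CompleteSpace X₀]
    [NormedAddCommGroup Y₀] [NormedSpace ℝ Y₀] [CompleteSpace Y₀]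
    (U : X →L[ℝ] X) (V : Y →L[ℝ] Y)
    (E : (Y × Y₀) →L[ℝ] (X × X₀)) (Einv : (X × X₀) →L[ℝ] (Y × Y₀))
    (F : (X × X₀) →L[ℝ] (Y × Y₀)) (Finv : (Y × Y₀) →L[ℝ] (X × X₀))
    (hE1 : E.comp Einv = ContinuousLinearMap.id ℝ (X × X₀))
    (hE2 : Einv.comp E = ContinuousLinearMap.id ℝ (Y × Y₀))
    (hF1 : F.comp Finv = ContinuousLinearMap.id ℝ (Y × Y₀))
    (hF2 : Finv.comp F = ContinuousLinearMap.id ℝ (X × X₀))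
    (hEq : blk U 0 0 (ContinuousLinearMap.id ℝ X₀) =
      E.comp ((blk V 0 0 (ContinuousLinearMap.id ℝ Y₀)).comp F))
    (happrox : ∀ ε : ℝ, 0 < ε → ∃ W W' : Y →L[ℝ] Y,
      W.comp W' = ContinuousLinearMap.id ℝ Y ∧ W'.comp W = ContinuousLinearMap.id ℝ Y ∧
      ‖V - W‖ < ε) :
    ∃ (A : X →L[ℝ] X) (B : Y →L[ℝ] X) (C : X →L[ℝ] Y) (D : Y →L[ℝ] Y)
      (A' : X →L[ℝ] X) (D' : Y →L[ℝ] Y),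
      A.comp A' = ContinuousLinearMap.id ℝ X ∧ A'.comp A = ContinuousLinearMap.id ℝ X ∧
      D.comp D' = ContinuousLinearMap.id ℝ Y ∧ D'.comp D = ContinuousLinearMap.id ℝ Y ∧
      U = A - B.comp (D'.comp C) ∧ V = D - C.comp (A'.comp B) := by
  have hE1v : ∀ p, E (Einv p) = p := fun p => by simpa using DFunLike.congr_fun hE1 p
  have hE2v : ∀ p, Einv (E p) = p := fun p => by simpa using DFunLike.congr_fun hE2 p
  have hF1v : ∀ p, F (Finv p) = p := fun p => by simpa using DFunLike.congr_fun hF1 p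
  have hF2v : ∀ p, Finv (F p) = p := fun p => by simpa using DFunLike.congr_fun hF2 p
  have hEqv : ∀ p : X × X₀, E (V (F p).1, (F p).2) = (U p.1, p.2) := by
    intro p
    have h := DFunLike.congr_fun hEq p
    simp [blk_apply] at h
    exact h.symm
  obtain ⟨W, W', hW1, hW2, hVW⟩ := happrox (((1+‖E‖)*(1+‖F‖))⁻¹) (by positivity)
  have hW1v : ∀ y, W (W' y) = y := fun y => by simpa using DFunLike.congr_fun hW1 y
  have hW2v : ∀ y, W' (W y) = y := fun y => by simpa using DFunLike.congr_fun hW2 y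
  set K : Y →L[ℝ] Y := W - V with hK
  have hKv : ∀ y, W y = V y + K y := fun y => by simp [hK]
  have hVv : ∀ y, V y = W y - K y := fun y => by simp [hK]
  have hKnorm : ‖K‖ < ((1+‖E‖)*(1+‖F‖))⁻¹ := by
    calc ‖K‖ = ‖V - W‖ := by rw [hK, norm_sub_rev]
    _ < _ := hVW
  set B1 : Y →L[ℝ] X := (ContinuousLinearMap.fst ℝ X X₀).comp (E.comp (ContinuousLinearMap.inl ℝ Y Y₀)) with hB1
  set B2 : Y →L[ℝ] X₀ := (ContinuousLinearMap.snd ℝ X X₀).comp (E.comp (ContinuousLinearMap.inl ℝ Y Y₀)) with hB2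
  set C1 : X →L[ℝ] Y := ((ContinuousLinearMap.fst ℝ Y Y₀).comp F).comp (ContinuousLinearMap.inl ℝ X X₀) with hC1
  set C2 : X₀ →L[ℝ] Y := ((ContinuousLinearMap.fst ℝ Y Y₀).comp F).comp (ContinuousLinearMap.inr ℝ X X₀) with hC2
  have hEv : ∀ a : Y, E (a, (0:Y₀)) = (B1 a, B2 a) := by
    intro a; rw [hB1, hB2]; simp
  have hFsplit : ∀ p : X × X₀, (F p).1 = C1 p.1 + C2 p.2 := by
    intro p
    have hp : p = ((p.1, 0) : X × X₀) + (0, p.2) := by simp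
    conv_lhs => rw [hp]
    rw [map_add]
    rw [hC1, hC2]; simp
  -- norm bound
  have hB2n : ∀ y, ‖B2 y‖ ≤ ‖E‖ * ‖y‖ := by
    intro y
    have h : B2 y = (E (y, 0)).2 := by rw [hB2]; simp
    rw [h]
    calc ‖(E (y, (0:Y₀))).2‖ ≤ ‖E (y, 0)‖ := norm_snd_le _
    _ ≤ ‖E‖ * ‖((y, 0) : Y × Y₀)‖ := le_opNorm _ _
    _ = ‖E‖ * ‖y‖ := by rw [Prod.norm_def]; simp
  have hC2n : ∀ z, ‖C2 z‖ ≤ ‖F‖ * ‖z‖ := by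
    intro z
    have h : C2 z = (F (0, z)).1 := by rw [hC2]; simp
    rw [h]
    calc ‖(F ((0:X), z)).1‖ ≤ ‖F (0, z)‖ := norm_fst_le _
    _ ≤ ‖F‖ * ‖((0, z) : X × X₀)‖ := le_opNorm _ _
    _ = ‖F‖ * ‖z‖ := by rw [Prod.norm_def]; simp
  have htn : ‖B2.comp (K.comp C2)‖ < 1 := by
    have h1 : ‖B2.comp (K.comp C2)‖ ≤ ‖E‖ * (‖K‖ * ‖F‖) := by
      apply opNorm_le_bound _ (by positivity)
      intro z
      have e0 : (B2.comp (K.comp C2)) z = B2 (K (C2 z)) := rfl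
      rw [e0]
      calc ‖B2 (K (C2 z))‖ ≤ ‖E‖ * ‖K (C2 z)‖ := hB2n _
      _ ≤ ‖E‖ * (‖K‖ * ‖C2 z‖) :=
          mul_le_mul_of_nonneg_left (K.le_opNorm (C2 z)) (norm_nonneg _)
      _ ≤ ‖E‖ * (‖K‖ * (‖F‖ * ‖z‖)) :=
          mul_le_mul_of_nonneg_left
            (mul_le_mul_of_nonneg_left (hC2n z) (norm_nonneg _)) (norm_nonneg _)
      _ = ‖E‖ * (‖K‖ * ‖F‖) * ‖z‖ := by ring
    have hc : (0:ℝ) < (1+‖E‖)*(1+‖F‖) := by positivity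
    have h3 : ‖K‖ * ((1+‖E‖)*(1+‖F‖)) < 1 := by
      rw [← lt_div_iff₀ hc]
      simpa [one_div] using hKnorm
    have h4 : ‖K‖ * ((1+‖E‖)*(1+‖F‖)) - ‖E‖ * (‖K‖ * ‖F‖) = ‖K‖ * (1 + ‖E‖ + ‖F‖) := by ring
    have h5 : (0:ℝ) ≤ ‖K‖ * (1 + ‖E‖ + ‖F‖) := by positivity
    linarith
  have htn' : ‖-(B2.comp (K.comp C2))‖ < 1 := by simpa using htn
  set P22 : X₀ →L[ℝ] X₀ := (((Units.oneSub (-(B2.comp (K.comp C2))) htn')⁻¹ : (X₀ →L[ℝ] X₀)ˣ) : X₀ →L[ℝ] X₀) with hP22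
  have hu1 : ∀ z, P22 z + B2 (K (C2 (P22 z))) = z := by
    intro z
    have h := DFunLike.congr_fun ((Units.oneSub (-(B2.comp (K.comp C2))) htn').mul_inv) z
    rw [← hP22] at h
    simpa [Units.val_oneSub, mul_apply, sub_apply, neg_apply, comp_apply, sub_neg_eq_add] using h
  have hu2 : ∀ z, P22 (z + B2 (K (C2 z))) = z := by
    intro z
    have h := DFunLike.congr_fun ((Units.oneSub (-(B2.comp (K.comp C2))) htn').inv_mul) z
    rw [← hP22] at h
    simpa [Units.val_oneSub, mul_apply, sub_apply, neg_apply, comp_apply, sub_neg_eq_add] using h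
  have hA2 : ∀ z, B2 (K (C2 (P22 z))) = z - P22 z := fun z => eq_sub_of_add_eq' (hu1 z)
  have hA1 : ∀ z, P22 (B2 (K (C2 z))) = z - P22 z := by
    intro z
    have h := hu2 z
    rw [map_add] at h
    exact eq_sub_of_add_eq' h
  -- the operators q, R, R'
  set q : Y →L[ℝ] Y := C2.comp (P22.comp B2) with hq
  set R : Y →L[ℝ] Y := ContinuousLinearMap.id ℝ Y - q.comp K with hR
  set R' : Y →L[ℝ] Y := ContinuousLinearMap.id ℝ Y + C2.comp (B2.comp K) with hR'
  have hqv : ∀ y, q y = C2 (P22 (B2 y)) := fun y => by rw [hq]; rfl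
  have hRv : ∀ y, R y = y - C2 (P22 (B2 (K y))) := fun y => by rw [hR]; simp [hqv]
  have hR'v : ∀ y, R' y = y + C2 (B2 (K y)) := fun y => by rw [hR']; simp
  have hRR' : ∀ y, R (R' y) = y := by
    intro y
    rw [hR'v, hRv, map_add, map_add]
    rw [hu2 (B2 (K y))]
    abel
  have hR'R : ∀ y, R' (R y) = y := by
    intro y
    rw [hRv, hR'v, map_sub, map_sub]
    rw [hA2 (B2 (K y))]
    simp only [map_sub]
    abel
  -- the extended operator Φ and its inverse Ψ
  set Phi : (X × X₀) →L[ℝ] (X × X₀) :=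
    E.comp ((blk W 0 0 (ContinuousLinearMap.id ℝ Y₀)).comp F) with hPhi
  set Psi : (X × X₀) →L[ℝ] (X × X₀) :=
    Finv.comp ((blk W' 0 0 (ContinuousLinearMap.id ℝ Y₀)).comp Einv) with hPsi
  have hPhiv : ∀ p, Phi p = E (W (F p).1, (F p).2) := by
    intro p
    rw [hPhi]
    simp [blk_apply]
  have hPsiv : ∀ p, Psi p = Finv (W' (Einv p).1, (Einv p).2) := by
    intro p
    rw [hPsi]
    simp [blk_apply]
  have hPhiPsi : ∀ p, Phi (Psi p) = p := by
    intro p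
    rw [hPsiv, hPhiv, hF1v]
    simp only [hW1v, Prod.mk.eta, hE1v]
  have hPsiPhi : ∀ p, Psi (Phi p) = p := by
    intro p
    rw [hPhiv, hPsiv, hE2v]
    simp only [hW2v, Prod.mk.eta, hF2v]
  have hstarv : ∀ p, Phi p = (U p.1, p.2) + (B1 (K (F p).1), B2 (K (F p).1)) := by
    intro p
    rw [hPhiv, hKv ((F p).1)]
    rw [show ((V (F p).1 + K (F p).1, (F p).2) : Y × Y₀)
        = (V (F p).1, (F p).2) + (K (F p).1, 0) by simp]
    rw [map_add, hEqv p, hEv]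
  -- triangular corrections
  set Nn : X₀ →L[ℝ] X := B1.comp (K.comp (C2.comp P22)) with hNn
  set Pm : X →L[ℝ] X₀ := P22.comp (B2.comp (K.comp C1)) with hPm
  have hNv : ∀ z, Nn z = B1 (K (C2 (P22 z))) := fun z => by rw [hNn]; rfl
  have hPmv : ∀ x, Pm x = P22 (B2 (K (C1 x))) := fun x => by rw [hPm]; rfl
  set T1 : (X × X₀) →L[ℝ] (X × X₀) :=
    blk (ContinuousLinearMap.id ℝ X) (-Nn) 0 (ContinuousLinearMap.id ℝ X₀) with hT1
  set T1i : (X × X₀) →L[ℝ] (X × X₀) :=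
    blk (ContinuousLinearMap.id ℝ X) Nn 0 (ContinuousLinearMap.id ℝ X₀) with hT1i
  set T2 : (X × X₀) →L[ℝ] (X × X₀) :=
    blk (ContinuousLinearMap.id ℝ X) 0 (-Pm) (ContinuousLinearMap.id ℝ X₀) with hT2
  set T2i : (X × X₀) →L[ℝ] (X × X₀) :=
    blk (ContinuousLinearMap.id ℝ X) 0 Pm (ContinuousLinearMap.id ℝ X₀) with hT2i
  have hT1v : ∀ p : X × X₀, T1 p = (p.1 - Nn p.2, p.2) := by
    intro p; rw [hT1, blk_apply]; simp [sub_eq_add_neg]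
  have hT1iv : ∀ p : X × X₀, T1i p = (p.1 + Nn p.2, p.2) := by
    intro p; rw [hT1i, blk_apply]; simp
  have hT2v : ∀ p : X × X₀, T2 p = (p.1, p.2 - Pm p.1) := by
    intro p; rw [hT2, blk_apply]; simp [sub_eq_add_neg, add_comm]
  have hT2iv : ∀ p : X × X₀, T2i p = (p.1, p.2 + Pm p.1) := by
    intro p; rw [hT2i, blk_apply]; simp [add_comm]
  have hT1T1i : ∀ p, T1 (T1i p) = p := by
    intro p; rw [hT1iv, hT1v]; simp
  have hT1iT1 : ∀ p, T1i (T1 p) = p := by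
    intro p; rw [hT1v, hT1iv]; simp
  have hT2T2i : ∀ p, T2 (T2i p) = p := by
    intro p; rw [hT2iv, hT2v]; simp
  have hT2iT2 : ∀ p, T2i (T2 p) = p := by
    intro p; rw [hT2v, hT2iv]; simp
  set M : (X × X₀) →L[ℝ] (X × X₀) := (T1.comp Phi).comp T2 with hM
  set Mi : (X × X₀) →L[ℝ] (X × X₀) := (T2i.comp Psi).comp T1i with hMi
  have hMv : ∀ p, M p = T1 (Phi (T2 p)) := fun p => by rw [hM]; rfl
  have hMiv0 : ∀ p, Mi p = T2i (Psi (T1i p)) := fun p => by rw [hMi]; rfl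
  have hMMi : ∀ p, M (Mi p) = p := by
    intro p
    rw [hMiv0, hMv, hT2T2i, hPhiPsi, hT1T1i]
  have hMiM : ∀ p, Mi (M p) = p := by
    intro p
    rw [hMv, hMiv0, hT1iT1, hPsiPhi, hT2iT2]
  -- Schur complement and its inverse
  set SA : X →L[ℝ] X := U + B1.comp (K.comp (R.comp C1)) with hSA
  have hSAv : ∀ x, SA x = U x + B1 (K (R (C1 x))) := fun x => by rw [hSA]; rfl
  have hMblkv : ∀ p : X × X₀, M p = (SA p.1, p.2 + B2 (K (C2 p.2))) := by
    intro p
    have hzeta : (F (p.1, p.2 - Pm p.1)).1 = C1 p.1 + C2 p.2 - C2 (Pm p.1) := by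
      rw [hFsplit]
      dsimp only
      rw [map_sub]
      abel
    have h2 : p.2 - Pm p.1 + B2 (K ((F (p.1, p.2 - Pm p.1)).1)) = p.2 + B2 (K (C2 p.2)) := by
      rw [hzeta, hPmv]
      simp only [map_sub, map_add]
      rw [hA2 (B2 (K (C1 p.1)))]
      abel
    have h1 : U p.1 + B1 (K ((F (p.1, p.2 - Pm p.1)).1)) - Nn (p.2 + B2 (K (C2 p.2))) = SA p.1 := by
      rw [hzeta, hNv, hu2 p.2, hSAv, hRv, hPmv]
      simp only [map_sub, map_add]
      abel
    rw [hMv, hT2v, hstarv, hT1v]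
    simp only [Prod.fst_add, Prod.snd_add]
    rw [h2, h1]
  have hM0 : ∀ z : X₀, M ((0 : X), z) = ((0 : X), z + B2 (K (C2 z))) := by
    intro z; rw [hMblkv]; simp
  have hMx : ∀ x : X, M (x, (0 : X₀)) = (SA x, (0 : X₀)) := by
    intro x; rw [hMblkv]; simp
  set A1 : X →L[ℝ] X :=
    (ContinuousLinearMap.fst ℝ X X₀).comp (Mi.comp (ContinuousLinearMap.inl ℝ X X₀)) with hA1d
  have hA1v : ∀ x, A1 x = (Mi (x, 0)).1 := fun x => by rw [hA1d]; rfl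
  have hMix : ∀ x, Mi (x, (0:X₀)) = (A1 x, (0:X₀)) := by
    intro x
    have h := hMMi (x, (0:X₀))
    rw [hMblkv] at h
    have h3 : (Mi (x, (0:X₀))).2 = 0 := by
      have h2 : (Mi (x, ((0:X₀)))).2 + B2 (K (C2 (Mi (x, (0:X₀))).2)) = 0 := congrArg Prod.snd h
      have h4 := congrArg P22 h2
      rwa [hu2, map_zero] at h4
    exact Prod.ext (hA1v x).symm h3
  have hSAA1 : ∀ x, SA (A1 x) = x := by
    intro x
    have h := hMMi (x, (0:X₀))
    rw [hMblkv] at h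
    have h1 : SA ((Mi (x, 0)).1) = x := congrArg Prod.fst h
    rwa [← hA1v] at h1
  have hA1SA : ∀ x, A1 (SA x) = x := by
    intro x
    have h := hMiM (x, (0:X₀))
    rw [hMx] at h
    exact congrArg Prod.fst ((hMix (SA x)).symm.trans h)
  have hMi2 : ∀ z : X₀, Mi ((0:X), z) = ((0:X), P22 z) := by
    intro z
    have h := hMiM ((0:X), P22 z)
    rw [hM0] at h
    rw [hu1 z] at h
    exact h
  have hMivFull : ∀ p : X × X₀, Mi p = (A1 p.1, P22 p.2) := by
    intro p
    have hp : p = ((p.1, (0:X₀)) : X × X₀) + ((0:X), p.2) := by simp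
    conv_lhs => rw [hp]
    rw [map_add, hMix, hMi2, Prod.mk_add_mk]
    simp
  have hPsiMi : ∀ p, Psi p = T2 (Mi (T1 p)) := by
    intro p
    rw [hMiv0, hT1iT1, hT2T2i]
  have hW'repr : ∀ y, W' y = (F (Psi (E (y, (0:Y₀))))).1 := by
    intro y
    rw [hPsiv, hE2v]
    dsimp only
    rw [hF1v]
  have hgamma : ∀ y, W' y = R (C1 (A1 (B1 y - Nn (B2 y)))) + C2 (P22 (B2 y)) := by
    intro y
    rw [hW'repr, hEv, hPsiMi, hT1v, hMivFull, hT2v, hFsplit]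
    dsimp only
    rw [hPmv, hRv]
    simp only [map_sub]
    abel
  -- final assembly
  have final : ∃ (A : X →L[ℝ] X) (B : Y →L[ℝ] X) (C : X →L[ℝ] Y) (D : Y →L[ℝ] Y)
      (A' : X →L[ℝ] X) (D' : Y →L[ℝ] Y),
      A.comp A' = ContinuousLinearMap.id ℝ X ∧ A'.comp A = ContinuousLinearMap.id ℝ X ∧
      D.comp D' = ContinuousLinearMap.id ℝ Y ∧ D'.comp D = ContinuousLinearMap.id ℝ Y ∧
      U = A - B.comp (D'.comp C) ∧ V = D - C.comp (A'.comp B) := by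
    refine ⟨SA, B1.comp (K.comp R), W.comp (R.comp C1), W.comp R, A1, R'.comp W',
      ?_, ?_, ?_, ?_, ?_, ?_⟩
    · ext x
      simpa using hSAA1 x
    · ext x
      simpa using hA1SA x
    · ext y
      simp only [comp_apply, ContinuousLinearMap.id_apply]
      rw [hRR', hW1v]
    · ext y
      simp only [comp_apply, ContinuousLinearMap.id_apply]
      rw [hW2v, hR'R]
    · ext x
      simp only [sub_apply, comp_apply]
      rw [hW2v, hR'R, hSAv]
      abel
    · ext y
      simp only [sub_apply, comp_apply]
      have e1 : B1 (K (R y)) = B1 (K y) - Nn (B2 (K y)) := by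
        rw [hRv]
        simp only [map_sub]
        rw [hNv]
      rw [e1]
      have e2 : R (C1 (A1 (B1 (K y) - Nn (B2 (K y))))) = W' (K y) - C2 (P22 (B2 (K y))) :=
        eq_sub_of_add_eq (hgamma (K y)).symm
      rw [e2, map_sub, hW1v, hRv, hVv]
      simp only [map_sub]
      abel
  exact final
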